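/- arXiv:1102.2787 — 9 statements merged into one kernel-verified Lean document; each statement's English description precedes it below -/
import Mathlib

section
/- Let A, B, D be real numbers with A ≥ B ≥ D ≥ 0. Then there exist real numbers x, y, z with x ≥ 0, y ≥ 0, z ≥ 0, x + y ≤ A, y + z ≤ B, z + x ≤ D, and x + y + z = min{(1/2)(A + B + D), B + D}. (If A < B + D the point (x,y,z) = (1/2)(A−B+D, A+B−D, −A+B+D) attains the value; otherwise (x,y,z) = (D, B, 0) attains it.) -/
/-! The value is attained at a vertex of the feasible region. When `A, B, D` satisfy the triangle
inequalities, all three constraints can be made tight at once, giving `(A + B + D) / 2`; when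
`A ≥ B + D`, the vertex `(D, B, 0)` makes the other two constraints tight, giving `B + D`. -/

def IsFeasibleValue (A B D v : ℝ) : Prop :=
  ∃ x y z : ℝ, x ≥ 0 ∧ y ≥ 0 ∧ z ≥ 0 ∧
    x + y ≤ A ∧ y + z ≤ B ∧ z + x ≤ D ∧ x + y + z = v

theorem isFeasibleValue_half_sum {A B D : ℝ} (hA : A ≤ B + D) (hB : B ≤ A + D) (hD : D ≤ A + B) :
    IsFeasibleValue A B D ((1/2) * (A + B + D)) :=
  ⟨(1/2) * (A - B + D), (1/2) * (A + B - D), (1/2) * (B + D - A),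
    by linarith, by linarith, by linarith, by linarith, by linarith, by linarith, by ring⟩

theorem isFeasibleValue_add {A B D : ℝ} (hB : 0 ≤ B) (hD : 0 ≤ D) (hA : B + D ≤ A) :
    IsFeasibleValue A B D (B + D) :=
  ⟨D, B, 0, hD, hB, le_rfl, by linarith, by linarith, by linarith, by ring⟩

/-- Attainability part of the linear program of Appendix D:
the value min{(1/2)(A+B+D), B+D} is attained by a feasible point. -/
theorem lp_attained (A B D : ℝ) (hAB : A ≥ B) (hBD : B ≥ D) (hD0 : D ≥ 0) :
    ∃ x y z : ℝ, x ≥ 0 ∧ y ≥ 0 ∧ z ≥ 0 ∧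
      x + y ≤ A ∧ y + z ≤ B ∧ z + x ≤ D ∧
      x + y + z = min ((1/2) * (A + B + D)) (B + D) := by
  rcases le_total A (B + D) with h | h
  · rw [min_eq_left (by linarith)]
    exact isFeasibleValue_half_sum h (by linarith) (by linarith)
  · rw [min_eq_right (by linarith)]
    exact isFeasibleValue_add (by linarith) hD0 h
end

section
/- Let a, b, P be nonnegative real numbers, let n be a positive integer, and let p₁,…,pₙ and q₁,…,qₙ be nonnegative real numbers with (1/n)·∑ᵢ pᵢ ≤ P and (1/n)·∑ᵢ qᵢ ≤ P. Then (1/n)·∑ᵢ log₂(1 + (√(a·pᵢ) + √(b·qᵢ))²) ≤ log₂(1 + (√a + √b)²·P). -/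
open Finset Real

/-! The pointwise bound `(√(a p) + √(b q))² ≤ (√a + √b)(√a p + √b q)` (Cauchy–Schwarz with
weights `√a, √b`) is linear in `(p, q)`, so averaging it and using the power constraints bounds
the mean of the arguments of `log₂` by `1 + (√a + √b)² P`; Jensen's inequality for the concave
function `log₂` finishes. -/

lemma Real.concaveOn_logb_Ioi {b : ℝ} (hb : 1 ≤ b) : ConcaveOn ℝ (Set.Ioi 0) (logb b) := by
  have h : logb b = fun x => (log b)⁻¹ • log x := by
    ext x
    rw [smul_eq_mul, logb, div_eq_inv_mul]
  exact h ▸ strictConcaveOn_log_Ioi.concaveOn.smul (inv_nonneg.2 (log_nonneg hb))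

lemma Real.inv_card_mul_sum_logb_le {ι : Type*} [Fintype ι] [Nonempty ι] {b : ℝ} (hb : 1 ≤ b)
    {x : ι → ℝ} (hx : ∀ i, 0 < x i) :
    (Fintype.card ι : ℝ)⁻¹ * ∑ i, logb b (x i) ≤ logb b ((Fintype.card ι : ℝ)⁻¹ * ∑ i, x i) := by
  have hw : ∑ _i : ι, (Fintype.card ι : ℝ)⁻¹ = 1 := by simp
  simpa [mul_sum] using
    (concaveOn_logb_Ioi hb).le_map_sum (t := univ) (fun _ _ => by positivity) hw
      (fun i _ => hx i)

lemma Real.sq_sqrt_mul_add_sqrt_mul_le (a b : ℝ) {x y : ℝ} (hx : 0 ≤ x) (hy : 0 ≤ y) :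
    (√(a * x) + √(b * y)) ^ 2 ≤ (√a + √b) * (√a * x + √b * y) := by
  have key : (√a + √b) * (√a * x + √b * y) - (√(a * x) + √(b * y)) ^ 2
      = √a * √b * (√x - √y) ^ 2 := by
    rw [sqrt_mul' a hx, sqrt_mul' b hy]
    linear_combination (-(√a ^ 2 + √a * √b)) * sq_sqrt hx - (√b ^ 2 + √a * √b) * sq_sqrt hy
  exact sub_nonneg.1 (key ▸ by positivity)

open Finset in
theorem jensen_step_f_general (a b P : ℝ)
    (n : ℕ) (hn : 0 < n) (p q : Fin n → ℝ)
    (hp : ∀ i, 0 ≤ p i) (hq : ∀ i, 0 ≤ q i)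
    (hpP : (1 / (n : ℝ)) * ∑ i, p i ≤ P)
    (hqP : (1 / (n : ℝ)) * ∑ i, q i ≤ P) :
    (1 / (n : ℝ)) * ∑ i, Real.logb 2 (1 + (Real.sqrt (a * p i) + Real.sqrt (b * q i))^2)
      ≤ Real.logb 2 (1 + (Real.sqrt a + Real.sqrt b)^2 * P) := by
  have : Nonempty (Fin n) := ⟨⟨0, hn⟩⟩
  set g : Fin n → ℝ := fun i => (√(a * p i) + √(b * q i)) ^ 2
  have hsum : ∑ i, g i ≤ (√a + √b) * (√a * ∑ i, p i + √b * ∑ i, q i) := by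
    calc ∑ i, g i ≤ ∑ i, (√a + √b) * (√a * p i + √b * q i) :=
          sum_le_sum fun i _ => sq_sqrt_mul_add_sqrt_mul_le a b (hp i) (hq i)
      _ = _ := by simp only [← mul_sum, sum_add_distrib]
  have hmean : (1 / (n : ℝ)) * ∑ i, g i ≤ (√a + √b) ^ 2 * P :=
    calc (1 / (n : ℝ)) * ∑ i, g i
        ≤ (1 / (n : ℝ)) * ((√a + √b) * (√a * ∑ i, p i + √b * ∑ i, q i)) := by gcongr
      _ = (√a + √b) * (√a * ((1 / (n : ℝ)) * ∑ i, p i) + √b * ((1 / (n : ℝ)) * ∑ i, q i)) := by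
          ring
      _ ≤ (√a + √b) * (√a * P + √b * P) := by gcongr
      _ = (√a + √b) ^ 2 * P := by ring
  calc (1 / (n : ℝ)) * ∑ i, logb 2 (1 + g i)
      ≤ logb 2 ((1 / (n : ℝ)) * ∑ i, (1 + g i)) := by
        simpa using inv_card_mul_sum_logb_le (x := fun i => 1 + g i) one_le_two fun i =>
          add_pos_of_pos_of_nonneg one_pos (sq_nonneg _)
    _ = logb 2 (1 + (1 / (n : ℝ)) * ∑ i, g i) := by
        rw [sum_add_distrib, mul_add]
        simp [hn.ne']
    _ ≤ logb 2 (1 + (√a + √b) ^ 2 * P) := by gcongr; exact one_lt_two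

open Finset in
/-- Jensen-inequality step (f) in Appendix C. -/
theorem jensen_step_f (a b P : ℝ) (ha : 0 ≤ a) (hb : 0 ≤ b) (hP : 0 ≤ P)
    (n : ℕ) (hn : 0 < n) (p q : Fin n → ℝ)
    (hp : ∀ i, 0 ≤ p i) (hq : ∀ i, 0 ≤ q i)
    (hpP : (1 / (n : ℝ)) * ∑ i, p i ≤ P)
    (hqP : (1 / (n : ℝ)) * ∑ i, q i ≤ P) :
    (1 / (n : ℝ)) * ∑ i, Real.logb 2 (1 + (Real.sqrt (a * p i) + Real.sqrt (b * q i))^2)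
      ≤ Real.logb 2 (1 + (Real.sqrt a + Real.sqrt b)^2 * P) :=
  jensen_step_f_general a b P n hn p q hp hq hpP hqP
end

section
/- Let h₁, h₂, h₃ be real numbers with h₁² ≥ h₂² ≥ h₃² and let P ≥ 0. Then 2·C(h₂²·P) + C(h₃²·P) ≤ 3 · min{ C((h₁² + h₂² + h₃²)·P), C(h₂²·P) + C(h₃²·P), (1/2)·(C(h₁²·P) + C(h₂²·P) + C(h₃²·P)) }. -/
/-- The Gaussian capacity function C(x) = (1/2)·log₂(1 + x). -/
noncomputable def Cap (x : ℝ) : ℝ := (1/2) * Real.logb 2 (1 + x)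

lemma Cap_nonneg {x : ℝ} (hx : 0 ≤ x) : 0 ≤ Cap x := by
  unfold Cap
  have : 0 ≤ Real.logb 2 (1 + x) := Real.logb_nonneg one_lt_two (by linarith)
  positivity

lemma Cap_le_Cap {x y : ℝ} (hx : -1 < x) (hxy : x ≤ y) : Cap x ≤ Cap y := by
  unfold Cap
  gcongr <;> linarith

theorem multiplicative_gap_general (h₁ h₂ h₃ P : ℝ)
    (h12 : h₁^2 ≥ h₂^2) (hP : P ≥ 0) :
    2 * Cap (h₂^2 * P) + Cap (h₃^2 * P)
      ≤ 3 * min (Cap ((h₁^2 + h₂^2 + h₃^2) * P))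
          (min (Cap (h₂^2 * P) + Cap (h₃^2 * P))
            ((1/2) * (Cap (h₁^2 * P) + Cap (h₂^2 * P) + Cap (h₃^2 * P)))) := by
  have h₂P : 0 ≤ h₂^2 * P := by positivity
  have h₃P : 0 ≤ h₃^2 * P := by positivity
  have C₂_nonneg := Cap_nonneg h₂P
  have C₃_nonneg := Cap_nonneg h₃P
  have C₂_le_C₁ : Cap (h₂^2 * P) ≤ Cap (h₁^2 * P) :=
    Cap_le_Cap (by linarith) (by gcongr)
  have C₂_le_Csum : Cap (h₂^2 * P) ≤ Cap ((h₁^2 + h₂^2 + h₃^2) * P) :=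
    Cap_le_Cap (by linarith) (by gcongr; linarith [sq_nonneg h₁, sq_nonneg h₃])
  have C₃_le_Csum : Cap (h₃^2 * P) ≤ Cap ((h₁^2 + h₂^2 + h₃^2) * P) :=
    Cap_le_Cap (by linarith) (by gcongr; linarith [sq_nonneg h₁, sq_nonneg h₂])
  rw [mul_min_of_nonneg _ _ (by norm_num), mul_min_of_nonneg _ _ (by norm_num),
    le_min_iff, le_min_iff]
  exact ⟨by linarith, by linarith, by linarith⟩

/-- Multiplicative gap bound Γ_m ≤ 3. -/
theorem multiplicative_gap (h₁ h₂ h₃ P : ℝ)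
    (h12 : h₁^2 ≥ h₂^2) (h23 : h₂^2 ≥ h₃^2) (hP : P ≥ 0) :
    2 * Cap (h₂^2 * P) + Cap (h₃^2 * P)
      ≤ 3 * min (Cap ((h₁^2 + h₂^2 + h₃^2) * P))
          (min (Cap (h₂^2 * P) + Cap (h₃^2 * P))
            ((1/2) * (Cap (h₁^2 * P) + Cap (h₂^2 * P) + Cap (h₃^2 * P)))) :=
  multiplicative_gap_general h₁ h₂ h₃ P h12 hP
end

section
/- Let h₁, h₂, h₃ be real numbers with h₁² ≥ h₂² ≥ h₃² and let P ≥ 0 satisfy h₂²·P ≤ 1/2. Then (2·C(h₂²·P) + C(h₃²·P)) − min{ C((h₁² + h₂² + h₃²)·P), C(h₂²·P) + C(h₃²·P), (1/2)·(C(h₁²·P) + C(h₂²·P) + C(h₃²·P)) } ≤ log₂(3/2). -/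
/-!
The gap is the largest of the three differences between the cut-set bound and the terms of the
minimum, so each is bounded separately. Two of them are at most `(3/2)·C(h₂²P) ≤ (3/4)·log₂(3/2)`
because `C(1/2) = (1/2)·log₂(3/2)`. For the remaining one, `C(a) + C(b) = C(a + b + ab)` turns
`2C(x) + C(y) ≤ C(s) + log₂(3/2)`, with `log₂(3/2) = C(5/4)`, into the polynomial inequality
`(1 + x)²(1 + y) ≤ (9/4)(1 + s)`, which holds for `0 ≤ y ≤ x ≤ 1/2` and `s ≥ 2x + y`.
-/

open Real

lemma Cap_le_Cap_s7 {a b : ℝ} (ha : -1 < a) (hab : a ≤ b) : Cap a ≤ Cap b := by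
  unfold Cap
  gcongr
  · norm_num
  · linarith

lemma Cap_add_Cap {a b : ℝ} (ha : -1 < a) (hb : -1 < b) :
    Cap a + Cap b = Cap (a + b + a * b) := by
  unfold Cap
  rw [← mul_add, ← logb_mul (by linarith) (by linarith)]
  ring_nf

lemma Cap_half : Cap (1/2) = logb 2 (3/2) / 2 := by
  unfold Cap
  norm_num
  ring

lemma Cap_five_fourths : Cap (5/4) = logb 2 (3/2) := by
  have h : (1 : ℝ) + 5/4 = (3/2) ^ 2 := by norm_num
  rw [Cap, h, logb_pow]
  ring

lemma two_mul_Cap_add_Cap_le_Cap_add_logb {x y s : ℝ} (hy : 0 ≤ y) (hyx : y ≤ x)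
    (hx : x ≤ 1/2) (hs : 2 * x + y ≤ s) :
    2 * Cap x + Cap y ≤ Cap s + logb 2 (3/2) := by
  have hx₀ : 0 ≤ x := hy.trans hyx
  calc 2 * Cap x + Cap y = Cap (x + x + x * x + y + (x + x + x * x) * y) := by
        rw [two_mul, Cap_add_Cap (by linarith) (by linarith),
          Cap_add_Cap (by nlinarith) (by linarith)]
    _ ≤ Cap (s + 5/4 + s * (5/4)) := Cap_le_Cap_s7 (by nlinarith) (by nlinarith)
    _ = Cap s + logb 2 (3/2) := by
        rw [← Cap_add_Cap (by linarith) (by norm_num), Cap_five_fourths]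

/-- Additive gap bound Γ_{a1} ≤ log₂(3/2) for the case h₂²P ≤ 1/2. -/
theorem additive_gap_low_power (h₁ h₂ h₃ P : ℝ)
    (h12 : h₁^2 ≥ h₂^2) (h23 : h₂^2 ≥ h₃^2) (hP : P ≥ 0)
    (hlow : h₂^2 * P ≤ 1/2) :
    (2 * Cap (h₂^2 * P) + Cap (h₃^2 * P))
      - min (Cap ((h₁^2 + h₂^2 + h₃^2) * P))
          (min (Cap (h₂^2 * P) + Cap (h₃^2 * P))
            ((1/2) * (Cap (h₁^2 * P) + Cap (h₂^2 * P) + Cap (h₃^2 * P))))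
      ≤ Real.logb 2 (3/2) := by
  have hy : 0 ≤ h₃^2 * P := by positivity
  have hyx : h₃^2 * P ≤ h₂^2 * P := by gcongr
  have hxz : h₂^2 * P ≤ h₁^2 * P := by gcongr
  have hCx : Cap (h₂^2 * P) ≤ logb 2 (3/2) / 2 := Cap_half ▸ Cap_le_Cap_s7 (by linarith) hlow
  have hCyz : Cap (h₃^2 * P) ≤ Cap (h₁^2 * P) := Cap_le_Cap_s7 (by linarith) (hyx.trans hxz)
  have hL : 0 ≤ logb 2 (3/2) := logb_nonneg one_lt_two (by norm_num)
  have hsum := two_mul_Cap_add_Cap_le_Cap_add_logb (s := (h₁^2 + h₂^2 + h₃^2) * P)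
    hy hyx hlow (by linarith)
  rw [sub_le_comm]
  exact le_min (by linarith) (le_min (by linarith) (by linarith))
end

section
/- Let h₁, h₂, h₃ be real numbers with h₁² ≥ h₂² ≥ h₃² and let P > 0 satisfy h₂²·P > 1/2. Then [ C((h₂² + h₃²)·P) + C(min{(h₁² + h₃²)·P, (|h₂| + |h₃|)²·P}) ] − 2·C(h₂²·P − 1/2) ≤ 5/2. -/
lemma Cap_le_half_add_Cap_of_one_add_le {x y : ℝ} (k : ℕ) (hx : -1 < x) (hy : -1 < y)
    (h : 1 + y ≤ 2 ^ k * (1 + x)) : Cap y ≤ k / 2 + Cap x := by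
  have hlog : Real.logb 2 (1 + y) ≤ Real.logb 2 (2 ^ k * (1 + x)) :=
    Real.logb_le_logb_of_le one_lt_two (by linarith) h
  rw [Real.logb_mul (by positivity) (by linarith), Real.logb_pow,
    Real.logb_self_eq_one one_lt_two] at hlog
  unfold Cap
  linarith

lemma abs_add_abs_sq_le_four_mul_sq {a b : ℝ} (h : b ^ 2 ≤ a ^ 2) :
    (|a| + |b|) ^ 2 ≤ 4 * a ^ 2 := by
  have hba : |b| ≤ |a| := sq_le_sq.mp h
  nlinarith [abs_nonneg b, sq_abs a]

theorem additive_gap_high_power_const_general (h₁ h₂ h₃ P : ℝ)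
    (h23 : h₂^2 ≥ h₃^2) (hP : P > 0)
    (hhigh : h₂^2 * P > 1/2) :
    (Cap ((h₂^2 + h₃^2) * P)
        + Cap (min ((h₁^2 + h₃^2) * P) ((|h₂| + |h₃|)^2 * P)))
      - 2 * Cap (h₂^2 * P - 1/2)
      ≤ 5/2 := by
  have hx : -1 < h₂^2 * P - 1/2 := by linarith
  have first : Cap ((h₂^2 + h₃^2) * P) ≤ 1 / 2 + Cap (h₂^2 * P - 1/2) := by
    have h3P : h₃^2 * P ≤ h₂^2 * P := mul_le_mul_of_nonneg_right h23 hP.le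
    exact_mod_cast Cap_le_half_add_Cap_of_one_add_le 1 hx (by nlinarith) (by linarith)
  have second : Cap (min ((h₁^2 + h₃^2) * P) ((|h₂| + |h₃|)^2 * P))
      ≤ 2 / 2 + Cap (h₂^2 * P - 1/2) := by
    have hmin : min ((h₁^2 + h₃^2) * P) ((|h₂| + |h₃|)^2 * P) ≤ 4 * (h₂^2 * P) :=
      calc _ ≤ (|h₂| + |h₃|)^2 * P := min_le_right _ _
        _ ≤ 4 * h₂^2 * P := mul_le_mul_of_nonneg_right (abs_add_abs_sq_le_four_mul_sq h23) hP.le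
        _ = 4 * (h₂^2 * P) := mul_assoc _ _ _
    have hpos : 0 ≤ min ((h₁^2 + h₃^2) * P) ((|h₂| + |h₃|)^2 * P) :=
      le_min (by positivity) (by positivity)
    exact_mod_cast Cap_le_half_add_Cap_of_one_add_le 2 hx (by linarith) (by linarith)
  linarith

/-- Additive gap bound Γ_{a2} ≤ 5/2 for h₂²P > 1/2. -/
theorem additive_gap_high_power_const (h₁ h₂ h₃ P : ℝ)
    (h12 : h₁^2 ≥ h₂^2) (h23 : h₂^2 ≥ h₃^2) (hP : P > 0)
    (hhigh : h₂^2 * P > 1/2) :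
    (Cap ((h₂^2 + h₃^2) * P)
        + Cap (min ((h₁^2 + h₃^2) * P) ((|h₂| + |h₃|)^2 * P)))
      - 2 * Cap (h₂^2 * P - 1/2)
      ≤ 5/2 :=
  additive_gap_high_power_const_general h₁ h₂ h₃ P h23 hP hhigh
end

section
/- Let h₂, h₃ be real numbers with h₂² ≥ h₃² and let P > 0 satisfy h₂²·P > 1/2. Then 2·C((h₂² + h₃²)·P) − 2·C(h₂²·P − 1/2) ≤ log₂(2 + 1/(h₂²·P)), and in particular 2·C((h₂² + h₃²)·P) − 2·C(h₂²·P − 1/2) ≤ 2. -/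
lemma two_mul_Cap_two_mul {x : ℝ} (hx : -1/2 < x) : 2 * Cap (2 * x) = 1 + 2 * Cap (x - 1/2) := by
  have hsplit : 1 + 2 * x = 2 * (1 + (x - 1/2)) := by ring
  unfold Cap
  rw [hsplit, Real.logb_mul (by norm_num) (by linarith), Real.logb_self_eq_one (by norm_num)]
  ring

theorem restricted_gap_general (h₂ h₃ P : ℝ)
    (h23 : h₂^2 ≥ h₃^2) (hhigh : h₂^2 * P > 1/2) :
    2 * Cap ((h₂^2 + h₃^2) * P) - 2 * Cap (h₂^2 * P - 1/2)
        ≤ Real.logb 2 (2 + 1 / (h₂^2 * P)) ∧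
      2 * Cap ((h₂^2 + h₃^2) * P) - 2 * Cap (h₂^2 * P - 1/2) ≤ 2 := by
  set a := h₂^2 * P
  have hP : 0 ≤ P := (pos_of_mul_pos_right (by linarith : 0 < h₂^2 * P) (sq_nonneg h₂)).le
  have hgap : 2 * Cap ((h₂^2 + h₃^2) * P) - 2 * Cap (a - 1/2) ≤ 1 := by
    have hle : Cap ((h₂^2 + h₃^2) * P) ≤ Cap (2 * a) :=
      Cap_le_Cap (by nlinarith [sq_nonneg h₂, sq_nonneg h₃]) (by nlinarith)
    linarith [two_mul_Cap_two_mul (x := a) (by linarith)]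
  have hone : 1 ≤ Real.logb 2 (2 + 1 / a) := by
    calc (1 : ℝ) = Real.logb 2 2 := (Real.logb_self_eq_one (by norm_num)).symm
      _ ≤ Real.logb 2 (2 + 1 / a) := by
        gcongr
        · norm_num
        · linarith [one_div_pos.mpr (show 0 < a by linarith)]
  exact ⟨hgap.trans hone, by linarith⟩

/-- Gap bound Γ^r_{a2} ≤ log₂(2 + 1/(h₂²P)) ≤ 2 for the restricted Y-channel. -/
theorem restricted_gap (h₂ h₃ P : ℝ)
    (h23 : h₂^2 ≥ h₃^2) (hP : P > 0) (hhigh : h₂^2 * P > 1/2) :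
    2 * Cap ((h₂^2 + h₃^2) * P) - 2 * Cap (h₂^2 * P - 1/2)
        ≤ Real.logb 2 (2 + 1 / (h₂^2 * P)) ∧
      2 * Cap ((h₂^2 + h₃^2) * P) - 2 * Cap (h₂^2 * P - 1/2) ≤ 2 :=
  restricted_gap_general h₂ h₃ P h23 hhigh
end

section
/- Let h₁, h₂, h₃ be real numbers with h₁² ≥ h₂² ≥ h₃² and h₂ ≠ 0. Then limsup as P → ∞ of [ C((h₂² + h₃²)·P) + C(min{(h₁² + h₃²)·P, (|h₂| + |h₃|)²·P}) − 2·C(h₂²·P − 1/2) ] is at most 3/2. -/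
/-!
Write `m = h₂²`. For `P ≥ 0`, `h₃² ≤ m` bounds the two arguments of the upper bound by `2mP` and
`(|h₂| + |h₃|)²P ≤ 4mP`, and `(1 + 2mP)(1 + 4mP) ≤ 8(1/2 + mP)²`; taking `½ log₂` turns the factor
`8` into the gap `3/2`. Since `h₂² ≤ h₁²`, the lower bound's argument is below both upper-bound
arguments, so the gap is also nonnegative, which makes the limsup a genuine one.
-/

noncomputable def yChannelGap (h₁ h₂ h₃ P : ℝ) : ℝ :=
  (Cap ((h₂^2 + h₃^2) * P) + Cap (min ((h₁^2 + h₃^2) * P) ((|h₂| + |h₃|)^2 * P)))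
    - 2 * Cap (h₂^2 * P - 1/2)

lemma Cap_add_Cap_sub_two_mul_Cap_le {x y z : ℝ} (hx : -1 < x) (hy : -1 < y) (hz : -1 < z)
    (h : (1 + x) * (1 + y) ≤ 8 * (1 + z) ^ 2) : Cap x + Cap y - 2 * Cap z ≤ 3 / 2 := by
  have hz' : 0 < 1 + z := by linarith
  have hlog : Real.logb 2 ((1 + x) * (1 + y)) ≤ Real.logb 2 (8 * (1 + z) ^ 2) :=
    Real.logb_le_logb_of_le one_lt_two (by nlinarith) h
  have h8 : Real.logb 2 8 = 3 := by
    rw [show (8 : ℝ) = 2 ^ (3 : ℕ) by norm_num, Real.logb_pow, Real.logb_self_eq_one one_lt_two]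
    norm_num
  rw [Real.logb_mul (by linarith) (by linarith), Real.logb_mul (by norm_num) (by positivity),
    Real.logb_pow, h8] at hlog
  unfold Cap
  push_cast at hlog
  linarith

lemma sq_le_add_abs_sq (a b : ℝ) : a ^ 2 ≤ (|a| + |b|) ^ 2 := by
  rw [← sq_abs a]
  exact pow_le_pow_left₀ (abs_nonneg a) (le_add_of_nonneg_right (abs_nonneg b)) 2

lemma add_abs_sq_le_four_mul_sq {a b : ℝ} (hba : b ^ 2 ≤ a ^ 2) : (|a| + |b|) ^ 2 ≤ 4 * a ^ 2 := by
  have := add_sq_le (a := |a|) (b := |b|)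
  rw [sq_abs, sq_abs] at this
  linarith

section

variable {h₁ h₂ h₃ P : ℝ}

lemma yChannelGap_le (h23 : h₃^2 ≤ h₂^2) (hP : 0 ≤ P) : yChannelGap h₁ h₂ h₃ P ≤ 3 / 2 := by
  set m := h₂ ^ 2
  set u := min ((h₁^2 + h₃^2) * P) ((|h₂| + |h₃|)^2 * P)
  have hmP : 0 ≤ m * P := by positivity
  have hu_nonneg : 0 ≤ u := le_min (by positivity) (by positivity)
  have hu_le : u ≤ 4 * m * P :=
    (min_le_right _ _).trans (mul_le_mul_of_nonneg_right (add_abs_sq_le_four_mul_sq h23) hP)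
  have hx_le : (h₂^2 + h₃^2) * P ≤ 2 * m * P := by nlinarith
  apply Cap_add_Cap_sub_two_mul_Cap_le (by nlinarith [sq_nonneg h₃]) (by linarith) (by linarith)
  calc (1 + (h₂^2 + h₃^2) * P) * (1 + u) ≤ (1 + 2 * m * P) * (1 + 4 * m * P) := by gcongr
    _ ≤ 8 * (1 + (m * P - 1 / 2)) ^ 2 := by nlinarith

lemma yChannelGap_nonneg (h12 : h₂^2 ≤ h₁^2) (hP : 0 ≤ P) : 0 ≤ yChannelGap h₁ h₂ h₃ P := by
  have hz : -1 < h₂^2 * P - 1/2 := by nlinarith [sq_nonneg h₂]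
  have hx : Cap (h₂^2 * P - 1/2) ≤ Cap ((h₂^2 + h₃^2) * P) :=
    Cap_le_Cap hz (by nlinarith [sq_nonneg h₃])
  have hy : Cap (h₂^2 * P - 1/2) ≤ Cap (min ((h₁^2 + h₃^2) * P) ((|h₂| + |h₃|)^2 * P)) := by
    refine Cap_le_Cap hz (le_min ?_ ?_)
    · nlinarith [sq_nonneg h₃]
    · nlinarith [sq_le_add_abs_sq h₂ h₃]
  unfold yChannelGap
  linarith

end

open Filter in
theorem gap_limsup_general_general (h₁ h₂ h₃ : ℝ)
    (h12 : h₁^2 ≥ h₂^2) (h23 : h₂^2 ≥ h₃^2) :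
    limsup (fun P : ℝ =>
        (Cap ((h₂^2 + h₃^2) * P)
            + Cap (min ((h₁^2 + h₃^2) * P) ((|h₂| + |h₃|)^2 * P)))
          - 2 * Cap (h₂^2 * P - 1/2)) atTop ≤ 3/2 := by
  change limsup (yChannelGap h₁ h₂ h₃) atTop ≤ 3 / 2
  have hbelow : ∀ᶠ P in atTop, 0 ≤ yChannelGap h₁ h₂ h₃ P := by
    filter_upwards [eventually_ge_atTop 0] with P hP using yChannelGap_nonneg h12 hP
  refine limsup_le_of_le (IsBoundedUnder.isCoboundedUnder_le ⟨0, hbelow⟩) ?_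
  filter_upwards [eventually_ge_atTop 0] with P hP using yChannelGap_le h23 hP

open Filter in
/-- The general Y-channel gap approaches at most 3/2 bits as P → ∞. -/
theorem gap_limsup_general (h₁ h₂ h₃ : ℝ)
    (h12 : h₁^2 ≥ h₂^2) (h23 : h₂^2 ≥ h₃^2) (h₂ne : h₂ ≠ 0) :
    limsup (fun P : ℝ =>
        (Cap ((h₂^2 + h₃^2) * P)
            + Cap (min ((h₁^2 + h₃^2) * P) ((|h₂| + |h₃|)^2 * P)))
          - 2 * Cap (h₂^2 * P - 1/2)) atTop ≤ 3/2 :=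
  gap_limsup_general_general h₁ h₂ h₃ h12 h23
end

section
/- Let h₁, h₂, h₃ be real numbers with h₁² ≥ h₂² ≥ h₃² and h₂ ≠ 0. Then the limit as P → ∞ of [ C((h₂² + h₃²)·P) + C(min{(h₁² + h₃²)·P, (|h₂| + |h₃|)²·P}) ] / log₂(P) exists and equals 1. -/
open Filter Topology Real

theorem tendsto_log_add_mul_div_log (c : ℝ) {k : ℝ} (hk : 0 < k) :
    Tendsto (fun x : ℝ => log (c + k * x) / log x) atTop (𝓝 1) := by
  have h_lim : Tendsto (fun x : ℝ => k + c / x) atTop (𝓝 k) := by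
    simpa using tendsto_const_nhds.add (tendsto_const_nhds.div_atTop (tendsto_id (α := ℝ)))
  have h_eq : ∀ᶠ x in atTop, 1 + log (k + c / x) / log x = log (c + k * x) / log x := by
    filter_upwards [eventually_gt_atTop (1 : ℝ), h_lim.eventually_const_lt hk] with x hx hkx
    have h_split : c + k * x = x * (k + c / x) := by field_simp; ring
    rw [h_split, log_mul (by linarith) hkx.ne', add_div, div_self (log_pos hx).ne']
  have h_bounded : Tendsto (fun x : ℝ => log (k + c / x)) atTop (𝓝 (log k)) :=
    (continuousAt_log hk.ne').tendsto.comp h_lim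
  simpa using (tendsto_const_nhds.add (h_bounded.div_atTop tendsto_log_atTop)).congr' h_eq

theorem tendsto_cap_mul_div_logb_two {k : ℝ} (hk : 0 < k) :
    Tendsto (fun P : ℝ => Cap (k * P) / logb 2 P) atTop (𝓝 (1 / 2)) := by
  have h_eq : (fun P : ℝ => Cap (k * P) / logb 2 P) =
      fun P => 1 / 2 * (log (1 + k * P) / log P) := by
    funext P
    rw [Cap, logb, logb, mul_div_assoc, div_div_div_cancel_right₀ (log_pos one_lt_two).ne']
  simpa only [h_eq, mul_one] using (tendsto_log_add_mul_div_log 1 hk).const_mul (1 / 2)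

open Filter in
theorem genie_prelog_general (h₁ h₂ h₃ : ℝ)
    (h12 : h₁^2 ≥ h₂^2) (h₂ne : h₂ ≠ 0) :
    Tendsto (fun P : ℝ =>
        (Cap ((h₂^2 + h₃^2) * P)
            + Cap (min ((h₁^2 + h₃^2) * P) ((|h₂| + |h₃|)^2 * P))) / Real.logb 2 P)
      atTop (nhds 1) := by
  have h_min_pos : 0 < min (h₁^2 + h₃^2) ((|h₂| + |h₃|)^2) :=
    lt_min (by linarith [sq_pos_of_ne_zero h₂ne, sq_nonneg h₃]) (by positivity)
  have h_sum := (tendsto_cap_mul_div_logb_two (k := h₂^2 + h₃^2) (by positivity)).add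
    (tendsto_cap_mul_div_logb_two h_min_pos)
  rw [add_halves] at h_sum
  refine h_sum.congr' ?_
  filter_upwards [eventually_ge_atTop 0] with P hP
  rw [min_mul_of_nonneg _ _ hP, add_div]

open Filter in
/-- The genie-aided sum-capacity upper bound has pre-log 1. -/
theorem genie_prelog (h₁ h₂ h₃ : ℝ)
    (h12 : h₁^2 ≥ h₂^2) (h23 : h₂^2 ≥ h₃^2) (h₂ne : h₂ ≠ 0) :
    Tendsto (fun P : ℝ =>
        (Cap ((h₂^2 + h₃^2) * P)
            + Cap (min ((h₁^2 + h₃^2) * P) ((|h₂| + |h₃|)^2 * P))) / Real.logb 2 P)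
      atTop (nhds 1) :=
  genie_prelog_general h₁ h₂ h₃ h12 h₂ne
end

section
/- Let h₁, h₂, h₃ be real numbers with h₁² ≥ h₂² ≥ h₃² and h₃ ≠ 0. Then there exists P₀ > 0 such that for all P ≥ P₀, C((h₂² + h₃²)·P) + C(min{(h₁² + h₃²)·P, (|h₂| + |h₃|)²·P}) < 2·C(h₂²·P) + C(h₃²·P). -/
lemma Cap_add_Cap_lt_of_mul_lt {x y u w : ℝ} (hx : -1 < x) (hy : -1 < y) (hu : -1 < u)
    (hw : -1 < w) (h : (1 + x) * (1 + y) < (1 + u) ^ 2 * (1 + w)) :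
    Cap x + Cap y < 2 * Cap u + Cap w := by
  have hx₁ : 0 < 1 + x := by linarith
  have hy₁ : 0 < 1 + y := by linarith
  have hu₁ : 0 < 1 + u := by linarith
  have hw₁ : 0 < 1 + w := by linarith
  have hlog := Real.logb_lt_logb (b := 2) one_lt_two (by positivity) h
  rw [Real.logb_mul hx₁.ne' hy₁.ne', Real.logb_mul (by positivity) hw₁.ne',
    Real.logb_pow] at hlog
  unfold Cap
  push_cast at hlog
  linarith

lemma exists_mul_lt_sq_mul {a b : ℝ} (c d : ℝ) (ha : 0 < a) (hb : 0 < b) (hc : 0 ≤ c)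
    (hd : 0 ≤ d) :
    ∃ P₀ : ℝ, P₀ > 0 ∧ ∀ P : ℝ, P ≥ P₀ →
      (1 + c * P) * (1 + d * P) < (1 + a * P) ^ 2 * (1 + b * P) := by
  have hab : 0 < a ^ 2 * b := by positivity
  refine ⟨1 + (1 + c) * (1 + d) / (a ^ 2 * b), by positivity, fun P hP => ?_⟩
  have hP₁ : 1 ≤ P := le_trans (le_add_of_nonneg_right (by positivity)) hP
  have hP_large : (1 + c) * (1 + d) < a ^ 2 * b * P := by
    rw [← div_lt_iff₀' hab]
    linarith
  calc (1 + c * P) * (1 + d * P) ≤ ((1 + c) * P) * ((1 + d) * P) := by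
        gcongr <;> nlinarith
    _ = (1 + c) * (1 + d) * P ^ 2 := by ring
    _ < a ^ 2 * b * P * P ^ 2 := by gcongr
    _ = (a * P) ^ 2 * (b * P) := by ring
    _ < (1 + a * P) ^ 2 * (1 + b * P) := by gcongr <;> first | positivity | linarith

theorem genie_tighter_general (h₁ h₂ h₃ : ℝ)
    (h23 : h₂^2 ≥ h₃^2) (h₃ne : h₃ ≠ 0) :
    ∃ P₀ : ℝ, P₀ > 0 ∧ ∀ P : ℝ, P ≥ P₀ →
      Cap ((h₂^2 + h₃^2) * P)
          + Cap (min ((h₁^2 + h₃^2) * P) ((|h₂| + |h₃|)^2 * P))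
        < 2 * Cap (h₂^2 * P) + Cap (h₃^2 * P) := by
  have hb : 0 < h₃ ^ 2 := by positivity
  have ha : 0 < h₂ ^ 2 := lt_of_lt_of_le hb h23
  have hsum : (|h₂| + |h₃|) ^ 2 ≤ 2 * (h₂ ^ 2 + h₃ ^ 2) := by
    simpa only [sq_abs] using add_sq_le (a := |h₂|) (b := |h₃|)
  obtain ⟨P₀, hP₀, hlt⟩ := exists_mul_lt_sq_mul (h₂ ^ 2 + h₃ ^ 2) (2 * (h₂ ^ 2 + h₃ ^ 2)) ha hb
    (by positivity) (by positivity)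
  refine ⟨P₀, hP₀, fun P hP => ?_⟩
  have hP_nonneg : 0 ≤ P := by linarith
  have hmin_nonneg : 0 ≤ min ((h₁^2 + h₃^2) * P) ((|h₂| + |h₃|)^2 * P) :=
    le_min (by positivity) (by positivity)
  have hmin : Cap (min ((h₁^2 + h₃^2) * P) ((|h₂| + |h₃|)^2 * P))
      ≤ Cap (2 * (h₂ ^ 2 + h₃ ^ 2) * P) :=
    Cap_le_Cap (by linarith) ((min_le_right _ _).trans (by gcongr))
  have hkey := Cap_add_Cap_lt_of_mul_lt (by nlinarith) (by nlinarith) (by nlinarith)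
    (by nlinarith) (hlt P hP)
  linarith

/-- The genie-aided bound is eventually strictly tighter than the cut-set bound. -/
theorem genie_tighter (h₁ h₂ h₃ : ℝ)
    (h12 : h₁^2 ≥ h₂^2) (h23 : h₂^2 ≥ h₃^2) (h₃ne : h₃ ≠ 0) :
    ∃ P₀ : ℝ, P₀ > 0 ∧ ∀ P : ℝ, P ≥ P₀ →
      Cap ((h₂^2 + h₃^2) * P)
          + Cap (min ((h₁^2 + h₃^2) * P) ((|h₂| + |h₃|)^2 * P))
        < 2 * Cap (h₂^2 * P) + Cap (h₃^2 * P) :=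
  genie_tighter_general h₁ h₂ h₃ h23 h₃ne
end
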